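/- arXiv:0903.2904 — 4 statements merged into one kernel-verified Lean document; each statement's English description precedes it below -/
import Mathlib

section
/- For every history h, every index i with 1 ≤ i ≤ |h|, and every closed PTLTL^FO formula φ: the judgement ⟨h,i,φ⟩ → t is derivable if and only if (h,i) ⊨ φ, and the judgement ⟨h,i,φ⟩ → f is derivable if and only if (h,i) ⊭ φ. -/
/-- Terms: variables, constants, and applications of interpreted function symbols
(function symbols are named by natural numbers). -/
inductive Tm (C : Type) : Type where
  | var : ℕ → Tm C
  | const : C → Tm C
  | func : ℕ → List (Tm C) → Tm C

/-- Evaluation of a term under an interpretation `F` of the function symbols and an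
environment (variable assignment) `ρ`. -/
def Tm.eval {C : Type} (F : ℕ → List C → C) (ρ : ℕ → C) : Tm C → C
  | .var x => ρ x
  | .const c => c
  | .func f args => F f (args.attach.map fun t => Tm.eval F ρ t.1)
  decreasing_by simp_wf; have := List.sizeOf_lt_of_mem t.2; omega

/-- Variables occurring in a term. -/
def Tm.fv {C : Type} : Tm C → List ℕ
  | .var x => [x]
  | .const _ => []
  | .func _ args => args.attach.flatMap fun t => Tm.fv t.1
  decreasing_by simp_wf; have := List.sizeOf_lt_of_mem t.2; omega

/-- PTLTL^FO formulas: uninterpreted predicate atoms, interpreted relation atoms,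
conjunction, negation, "previous" X⁻¹, "since" S, and the guarded universal
quantifier `all xs p ψ` (∀(x₁,…,xₙ):p. ψ). -/
inductive Fm (C : Type) : Type where
  | atom : ℕ → List (Tm C) → Fm C
  | rel : ℕ → List (Tm C) → Fm C
  | and : Fm C → Fm C → Fm C
  | not : Fm C → Fm C
  | prev : Fm C → Fm C
  | since : Fm C → Fm C → Fm C
  | all : List ℕ → ℕ → Fm C → Fm C

/-- Free variables of a formula. -/
def Fm.fv {C : Type} : Fm C → List ℕ
  | .atom _ ts => ts.flatMap Tm.fv
  | .rel _ ts => ts.flatMap Tm.fv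
  | .and a b => a.fv ++ b.fv
  | .not a => a.fv
  | .prev a => a.fv
  | .since a b => a.fv ++ b.fv
  | .all xs _ a => a.fv.filter (fun v => v ∉ xs)

/-- A formula is closed if it has no free variables. -/
def Fm.Closed {C : Type} (φ : Fm C) : Prop := φ.fv = []

/-- A session is a finite set of events `p(c₁,…,cₙ)`. -/
abbrev Session (C : Type) := Finset (ℕ × List C)

/-- A history is a (finite) list of sessions. -/
abbrev History (C : Type) := List (Session C)

/-- Update an environment on the list of variables `xs` with the list of values `cs`. -/
def updEnv {C : Type} (ρ : ℕ → C) (xs : List ℕ) (cs : List C) : ℕ → C :=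
  fun v => ((xs.zip cs).lookup v).getD (ρ v)

/-- The forcing relation `(h,i) ⊨ φ` (1-based session index `i`, environment `ρ`),
with interpretation `F` of function symbols and `R` of relation symbols. -/
def Sat {C : Type} (F : ℕ → List C → C) (R : ℕ → List C → Bool) (h : History C) :
    ℕ → (ℕ → C) → Fm C → Prop
  | i, ρ, .atom p ts => (p, ts.map (Tm.eval F ρ)) ∈ h.getD (i - 1) ∅
  | i, ρ, .rel r ts => R r (ts.map (Tm.eval F ρ)) = true
  | i, ρ, .and a b => Sat F R h i ρ a ∧ Sat F R h i ρ b
  | i, ρ, .not a => ¬ Sat F R h i ρ a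
  | i, ρ, .prev a => 1 < i ∧ Sat F R h (i - 1) ρ a
  | i, ρ, .since a b =>
      ∃ j, 1 ≤ j ∧ j ≤ i ∧ Sat F R h j ρ b ∧ ∀ k, j < k → k ≤ i → Sat F R h k ρ a
  | i, ρ, .all xs p a =>
      ∀ cs : List C, cs.length = xs.length → (p, cs) ∈ h.getD (i - 1) ∅ →
        Sat F R h i (updEnv ρ xs cs) a

/-- The evaluation judgement `⟨h,i,φ⟩ → v` (with an environment `ρ` carried along for
the instantiated bodies of quantifiers), defined inductively by the evaluation rules. -/
inductive Eval {C : Type} [DecidableEq C] (F : ℕ → List C → C) (R : ℕ → List C → Bool)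
    (h : History C) : ℕ → (ℕ → C) → Fm C → Bool → Prop where
  | atom : ∀ i ρ p ts,
      Eval F R h i ρ (.atom p ts) (decide ((p, ts.map (Tm.eval F ρ)) ∈ h.getD (i - 1) ∅))
  | rel : ∀ i ρ r ts, Eval F R h i ρ (.rel r ts) (R r (ts.map (Tm.eval F ρ)))
  | not : ∀ i ρ a v, Eval F R h i ρ a v → Eval F R h i ρ (.not a) (!v)
  | and : ∀ i ρ a b v₁ v₂, Eval F R h i ρ a v₁ → Eval F R h i ρ b v₂ →
      Eval F R h i ρ (.and a b) (v₁ && v₂)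
  | all : ∀ i ρ xs p a (V : List C → Bool) (b : Bool),
      (∀ cs : List C, cs.length = xs.length → (p, cs) ∈ h.getD (i - 1) ∅ →
        Eval F R h i (updEnv ρ xs cs) a (V cs)) →
      (b = true ↔ ∀ cs : List C, cs.length = xs.length → (p, cs) ∈ h.getD (i - 1) ∅ →
        V cs = true) →
      Eval F R h i ρ (.all xs p a) b
  | prev_one : ∀ ρ a, Eval F R h 1 ρ (.prev a) false
  | prev : ∀ i ρ a v, 1 < i → Eval F R h (i - 1) ρ a v → Eval F R h i ρ (.prev a) v
  | since_one : ∀ ρ a b v₂, Eval F R h 1 ρ b v₂ → Eval F R h 1 ρ (.since a b) v₂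
  | since : ∀ i ρ a b v₁ v₂ v₃, 1 < i →
      Eval F R h i ρ b v₂ → Eval F R h i ρ a v₁ → Eval F R h (i - 1) ρ (.since a b) v₃ →
      Eval F R h i ρ (.since a b) (v₂ || (v₁ && v₃))

theorem sat_since_one {C : Type} (F : ℕ → List C → C) (R : ℕ → List C → Bool)
    (h : History C) (a b : Fm C) (ρ : ℕ → C) :
    Sat F R h 1 ρ (.since a b) ↔ Sat F R h 1 ρ b := by
  show (∃ j, 1 ≤ j ∧ j ≤ 1 ∧ _ ∧ _) ↔ _
  constructor
  · rintro ⟨j, hj1, hj2, hb, _⟩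
    have : j = 1 := by omega
    subst this; exact hb
  · intro hb
    exact ⟨1, le_rfl, le_rfl, hb, fun k hk1 hk2 => by omega⟩

theorem sat_since_iff {C : Type} (F : ℕ → List C → C) (R : ℕ → List C → Bool)
    (h : History C) (a b : Fm C) (i : ℕ) (hi : 1 < i) (ρ : ℕ → C) :
    Sat F R h i ρ (.since a b) ↔
      Sat F R h i ρ b ∨ (Sat F R h i ρ a ∧ Sat F R h (i - 1) ρ (.since a b)) := by
  show (∃ j, _) ↔ _ ∨ (_ ∧ ∃ j, _)
  constructor
  · rintro ⟨j, hj1, hj2, hb, ha⟩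
    rcases eq_or_lt_of_le hj2 with rfl | hj3
    · exact Or.inl hb
    · refine Or.inr ⟨ha i hj3 le_rfl, j, hj1, by omega, hb, fun k hk1 hk2 => ha k hk1 (by omega)⟩
  · rintro (hb | ⟨ha, j, hj1, hj2, hb, ha'⟩)
    · exact ⟨i, by omega, le_rfl, hb, fun k hk1 hk2 => by omega⟩
    · refine ⟨j, hj1, by omega, hb, fun k hk1 hk2 => ?_⟩
      rcases eq_or_lt_of_le hk2 with rfl | hk3
      · exact ha
      · exact ha' k hk1 (by omega)

theorem eval_sound {C : Type} [DecidableEq C] (F : ℕ → List C → C) (R : ℕ → List C → Bool)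
    (h : History C) {i : ℕ} {ρ : ℕ → C} {φ : Fm C} {v : Bool}
    (e : Eval F R h i ρ φ v) : (v = true ↔ Sat F R h i ρ φ) := by
  induction e with
  | atom i ρ p ts => simp [Sat]
  | rel i ρ r ts => simp [Sat]
  | not i ρ a v e ih => cases v <;> simp_all [Sat]
  | and i ρ a b v₁ v₂ e1 e2 ih1 ih2 => simp [Sat, ← ih1, ← ih2]
  | all i ρ xs p a V b he hb ih =>
      rw [hb]
      constructor
      · intro H cs h1 h2
        exact (ih cs h1 h2).mp (H cs h1 h2)
      · intro H cs h1 h2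
        exact (ih cs h1 h2).mpr (H cs h1 h2)
  | prev_one ρ a => simp [Sat]
  | prev i ρ a v hi e ih => simp [Sat, ← ih, hi]
  | since_one ρ a b v₂ e ih => rw [sat_since_one]; exact ih
  | since i ρ a b v₁ v₂ v₃ hi e2 e1 e3 ih2 ih1 ih3 =>
      rw [sat_since_iff F R h a b i hi]
      simp [← ih1, ← ih2, ← ih3]

theorem eval_total {C : Type} [DecidableEq C] (F : ℕ → List C → C) (R : ℕ → List C → Bool)
    (h : History C) (φ : Fm C) : ∀ (i : ℕ), 1 ≤ i → ∀ ρ, ∃ v, Eval F R h i ρ φ v := by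
  induction φ with
  | atom p ts => exact fun i _ ρ => ⟨_, .atom i ρ p ts⟩
  | rel r ts => exact fun i _ ρ => ⟨_, .rel i ρ r ts⟩
  | and a b iha ihb =>
      intro i hi ρ
      obtain ⟨v₁, e1⟩ := iha i hi ρ
      obtain ⟨v₂, e2⟩ := ihb i hi ρ
      exact ⟨_, .and i ρ a b v₁ v₂ e1 e2⟩
  | not a iha =>
      intro i hi ρ
      obtain ⟨v, e⟩ := iha i hi ρ
      exact ⟨_, .not i ρ a v e⟩
  | prev a iha =>
      intro i hi ρ
      rcases eq_or_lt_of_le hi with hi1 | hi1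
      · exact ⟨false, hi1 ▸ .prev_one ρ a⟩
      · obtain ⟨v, e⟩ := iha (i - 1) (by omega) ρ
        exact ⟨v, .prev i ρ a v hi1 e⟩
  | since a b iha ihb =>
      intro i
      induction i with
      | zero => omega
      | succ n ihn =>
          intro _ ρ
          by_cases hn : n = 0
          · subst hn
            obtain ⟨v₂, e2⟩ := ihb 1 le_rfl ρ
            exact ⟨v₂, .since_one ρ a b v₂ e2⟩
          · obtain ⟨v₂, e2⟩ := ihb (n + 1) (by omega) ρ
            obtain ⟨v₁, e1⟩ := iha (n + 1) (by omega) ρ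
            obtain ⟨v₃, e3⟩ := ihn (by omega) ρ
            exact ⟨_, .since (n + 1) ρ a b v₁ v₂ v₃ (by omega) e2 e1 (by simpa using e3)⟩
  | all xs p a iha =>
      intro i hi ρ
      classical
      choose V hV using fun cs => iha i hi (updEnv ρ xs cs)
      refine ⟨_, .all i ρ xs p a V
        (decide (∀ cs : List C, cs.length = xs.length → (p, cs) ∈ h.getD (i - 1) ∅ →
          V cs = true)) (fun cs _ _ => hV cs) (by simp)⟩

/-- For every history `h`, every index `i` with `1 ≤ i ≤ |h|`, and every
closed formula `φ`: `⟨h,i,φ⟩ → t` is derivable iff `(h,i) ⊨ φ`, and `⟨h,i,φ⟩ → f` is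
derivable iff `(h,i) ⊭ φ`. -/
theorem eval_iff_sat {C : Type} [DecidableEq C] (F : ℕ → List C → C) (R : ℕ → List C → Bool)
    (h : History C) (hne : h ≠ []) (i : ℕ) (hi1 : 1 ≤ i) (hi2 : i ≤ h.length)
    (φ : Fm C) (hc : φ.Closed) (ρ : ℕ → C) :
    (Eval F R h i ρ φ true ↔ Sat F R h i ρ φ) ∧
    (Eval F R h i ρ φ false ↔ ¬ Sat F R h i ρ φ) := by
  obtain ⟨v, e⟩ := eval_total F R h φ i hi1 ρ
  have hv := eval_sound F R h e
  constructor
  · constructor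
    · intro e'; exact (eval_sound F R h e').mp rfl
    · intro hs
      have : v = true := hv.mpr hs
      exact this ▸ e
  · constructor
    · intro e'
      have := eval_sound F R h e'
      simp at this; exact this
    · intro hs
      have : v = false := by
        cases v
        · rfl
        · exact absurd (hv.mp rfl) hs
      exact this ▸ e
end

section
/- Let F ≡ Q₁x₁. Q₂x₂. … Qₙxₙ. E(x₁,…,xₙ) be a closed quantified Boolean formula in prenex form, where each Qᵢ ∈ {∀,∃} and E is a Boolean combination of the variables x₁,…,xₙ. Let φ be the PTLTL^FO formula Q₁x₁:p₁. Q₂x₂:p₂. … Qₙxₙ:pₙ. E(true(x₁),…,true(xₙ)) (E with the same Boolean connectives, each variable xᵢ replaced by the atom true(xᵢ)), where p₁,…,pₙ are distinct unary uninterpreted predicates and true is a further unary uninterpreted predicate, and let h be the history consisting of the single session {p₁(0), p₁(1), p₂(0), p₂(1), …, pₙ(0), pₙ(1), true(1)} over constants 0 and 1. Then F evaluates to true (under the standard Boolean semantics of QBF) if and only if h ⊨ φ. -/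
/-- Boolean expressions over variables (named by natural numbers). -/
inductive BExpr : Type where
  | var : ℕ → BExpr
  | and : BExpr → BExpr → BExpr
  | or : BExpr → BExpr → BExpr
  | not : BExpr → BExpr

/-- Evaluation of a Boolean expression under an assignment. -/
def BExpr.eval (v : ℕ → Bool) : BExpr → Bool
  | .var x => v x
  | .and a b => a.eval v && b.eval v
  | .or a b => a.eval v || b.eval v
  | .not a => !(a.eval v)

/-- Variables of a Boolean expression. -/
def BExpr.vars : BExpr → List ℕ
  | .var x => [x]
  | .and a b => a.vars ++ b.vars
  | .or a b => a.vars ++ b.vars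
  | .not a => a.vars

/-- Standard QBF semantics of the prenex formula `Q₁x_k. Q₂x_{k+1}. … E`;
the quantifier prefix is given as a list of Booleans (`true` = ∀, `false` = ∃), and
the variable quantified at position `j` of the prefix is `x_{k+j}`. -/
def QbfTrue (v : ℕ → Bool) : ℕ → List Bool → BExpr → Prop
  | _, [], E => E.eval v = true
  | k, q :: qs, E =>
      if q then ∀ b : Bool, QbfTrue (fun m => if m = k then b else v m) (k + 1) qs E
      else ∃ b : Bool, QbfTrue (fun m => if m = k then b else v m) (k + 1) qs E

/-- Translation of the matrix: each variable `xᵢ` is replaced by the atom `true(xᵢ)`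
(the predicate `true` is predicate symbol `0`); disjunction is the derived connective. -/
def trE : BExpr → Fm ℕ
  | .var x => .atom 0 [.var x]
  | .and a b => .and (trE a) (trE b)
  | .or a b => .not (.and (.not (trE a)) (.not (trE b)))
  | .not a => .not (trE a)

/-- Translation of the prefix: `Qᵢxᵢ` becomes the guarded quantifier `Qᵢ xᵢ : pᵢ`
(predicate `pᵢ` is predicate symbol `i`), with `∃x:p.ψ := ¬∀x:p.¬ψ`. -/
def trQ : ℕ → List Bool → BExpr → Fm ℕ
  | _, [], E => trE E
  | k, q :: qs, E =>
      if q then .all [k] k (trQ (k + 1) qs E)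
      else .not (.all [k] k (.not (trQ (k + 1) qs E)))

/-- The single session `{p₁(0), p₁(1), …, pₙ(0), pₙ(1), true(1)}`. -/
def qbfSession (n : ℕ) : Session ℕ :=
  ((Finset.Icc 1 n) ×ˢ ({[0], [1]} : Finset (List ℕ))) ∪ {(0, [1])}

/-!
In the one-session history the guard `pᵢ` holds exactly of the constants `0` and `1`, and
`true(c)` holds exactly when `c = 1`. Reading a constant `c` as the Boolean `c = 1`, each
guarded quantifier `Qᵢ xᵢ : pᵢ` therefore becomes the Boolean quantifier `Qᵢ xᵢ` and the
translated matrix evaluates like `E`; an induction along the prefix matches the two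
semantics.
-/

lemma updEnv_singleton {C : Type} (ρ : ℕ → C) (k : ℕ) (c : C) :
    updEnv ρ [k] [c] = Function.update ρ k c := by
  funext m
  by_cases h : m = k
  · subst h; simp [updEnv]
  · simp [updEnv, List.lookup, h, beq_false_of_ne h]

lemma sat_trE_iff (F : ℕ → List ℕ → ℕ) (R : ℕ → List ℕ → Bool) (h : History ℕ) (i : ℕ)
    (ρ : ℕ → ℕ) (E : BExpr) :
    Sat F R h i ρ (trE E) ↔ E.eval (fun x => decide ((0, [ρ x]) ∈ h.getD (i - 1) ∅)) := by
  induction E with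
  | var x => simp [trE, Sat, BExpr.eval, Tm.eval]
  | and a b iha ihb => simp [trE, Sat, BExpr.eval, iha, ihb]
  | or a b iha ihb => simp [trE, Sat, BExpr.eval, iha, ihb, or_iff_not_and_not]
  | not a iha => simp [trE, Sat, BExpr.eval, iha]

lemma sat_all_singleton_iff {C : Type} (F : ℕ → List C → C) (R : ℕ → List C → Bool)
    (h : History C) (i k : ℕ) (ρ : ℕ → C) (ψ : Fm C) (c₀ c₁ : C)
    (hguard : ∀ cs, (k, cs) ∈ h.getD (i - 1) ∅ ↔ cs = [c₀] ∨ cs = [c₁]) :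
    Sat F R h i ρ (.all [k] k ψ) ↔
      Sat F R h i (Function.update ρ k c₀) ψ ∧ Sat F R h i (Function.update ρ k c₁) ψ := by
  simp only [Sat, hguard]
  constructor
  · intro H
    exact ⟨by simpa [updEnv_singleton] using H [c₀] rfl (.inl rfl),
      by simpa [updEnv_singleton] using H [c₁] rfl (.inr rfl)⟩
  · rintro ⟨h₀, h₁⟩ cs hlen (rfl | rfl) <;> simpa [updEnv_singleton]

lemma mem_qbfSession_true_iff (n c : ℕ) : (0, [c]) ∈ qbfSession n ↔ c = 1 := by
  simp [qbfSession]

lemma mem_qbfSession_guard_iff {n k : ℕ} (hk : 1 ≤ k) (hkn : k ≤ n) (cs : List ℕ) :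
    (k, cs) ∈ qbfSession n ↔ cs = [0] ∨ cs = [1] := by
  have hk0 : k ≠ 0 := by omega
  simp [qbfSession, hk, hkn, hk0]

lemma sat_trQ_iff (F : ℕ → List ℕ → ℕ) (R : ℕ → List ℕ → Bool) (n : ℕ) (E : BExpr)
    (qs : List Bool) (k : ℕ) (hk : 1 ≤ k) (hkn : k + qs.length ≤ n + 1) (ρ : ℕ → ℕ) :
    Sat F R [qbfSession n] 1 ρ (trQ k qs E) ↔
      QbfTrue (fun x => decide (ρ x = 1)) k qs E := by
  induction qs generalizing k ρ with
  | nil => simp [trQ, QbfTrue, sat_trE_iff, mem_qbfSession_true_iff]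
  | cons q qs ih =>
    simp only [List.length_cons] at hkn
    have hguard : ∀ cs, (k, cs) ∈ ([qbfSession n] : History ℕ).getD (1 - 1) ∅ ↔
        cs = [0] ∨ cs = [1] := fun cs => by
      simpa using mem_qbfSession_guard_iff hk (by omega) cs
    have hstep : ∀ b : Bool,
        Sat F R [qbfSession n] 1 (Function.update ρ k b.toNat) (trQ (k + 1) qs E) ↔
          QbfTrue (fun m => if m = k then b else decide (ρ m = 1)) (k + 1) qs E := by
      intro b
      rw [ih (k + 1) (by omega) (by omega)]
      congr! 2 with m
      by_cases hm : m = k <;> simp [hm]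
    cases q
    · simp only [trQ, QbfTrue, Bool.false_eq_true, if_false, Bool.exists_bool]
      rw [← hstep false, ← hstep true, Sat, sat_all_singleton_iff F R _ _ _ _ _ 0 1 hguard]
      simp only [Sat, Bool.toNat_false, Bool.toNat_true]
      tauto
    · simp only [trQ, QbfTrue, if_true, Bool.forall_bool]
      rw [← hstep false, ← hstep true, sat_all_singleton_iff F R _ _ _ _ _ 0 1 hguard]
      rfl

theorem qbf_reduction_general (Q : List Bool) (E : BExpr)
    (F : ℕ → List ℕ → ℕ) (R : ℕ → List ℕ → Bool) :
    (∀ v : ℕ → Bool, QbfTrue v 1 Q E) ↔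
      (∀ ρ : ℕ → ℕ, Sat F R [qbfSession Q.length] 1 ρ (trQ 1 Q E)) := by
  have key := sat_trQ_iff F R Q.length E Q 1 le_rfl (by omega)
  constructor
  · exact fun H ρ => (key ρ).mpr (H _)
  · intro H v
    have hv : (fun x => decide ((v x).toNat = 1)) = v := by
      funext x; cases v x <;> rfl
    simpa [hv] using (key fun x => (v x).toNat).mp (H _)

/-- For a closed prenex QBF `F ≡ Q₁x₁.…Qₙxₙ.E(x₁,…,xₙ)`, with `φ` the
PTLTL^FO formula `Q₁x₁:p₁.…Qₙxₙ:pₙ. E(true(x₁),…,true(xₙ))` and `h` the one-session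
history `{p₁(0), p₁(1), …, pₙ(0), pₙ(1), true(1)}`: `F` is true iff `h ⊨ φ`. -/
theorem qbf_reduction (Q : List Bool) (E : BExpr)
    (hclosed : ∀ x ∈ E.vars, 1 ≤ x ∧ x ≤ Q.length)
    (F : ℕ → List ℕ → ℕ) (R : ℕ → List ℕ → Bool) :
    (∀ v : ℕ → Bool, QbfTrue v 1 Q E) ↔
      (∀ ρ : ℕ → ℕ, Sat F R [qbfSession Q.length] 1 ρ (trQ 1 Q E)) :=
  qbf_reduction_general Q E F R
end

section
/- Let G(x⃗) be a positive guard over variables x⃗ and let h be a history. Then the set of solutions of the guard instantiation problem (h, G(x⃗)), i.e., the set of tuples of constants u⃗ such that h ⊨ G(u⃗), is finite; moreover, every solution consists only of constants that appear in h. -/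
/-- Simple guards `γ ::= p(u⃗) | γ∧γ | G⁻¹γ | F⁻¹γ`, where the arguments `u⃗` of an atom
are variables (`Sum.inl`) or constants (`Sum.inr`); no function symbols are allowed. -/
inductive SG (C : Type) : Type where
  | atom : ℕ → List (ℕ ⊕ C) → SG C
  | and : SG C → SG C → SG C
  | galw : SG C → SG C
  | fsome : SG C → SG C

/-- Positive guards `G ::= γ | G∧G | G∨G | G⁻¹G | F⁻¹G | G S G`. -/
inductive PG (C : Type) : Type where
  | simple : SG C → PG C
  | and : PG C → PG C → PG C
  | or : PG C → PG C → PG C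
  | galw : PG C → PG C
  | fsome : PG C → PG C
  | since : PG C → PG C → PG C

/-- Semantics of simple guards (environment `ρ`, 1-based session index `i`). -/
def SG.sat {C : Type} (h : History C) : ℕ → (ℕ → C) → SG C → Prop
  | i, ρ, .atom p args => (p, args.map (Sum.elim ρ id)) ∈ h.getD (i - 1) ∅
  | i, ρ, .and a b => SG.sat h i ρ a ∧ SG.sat h i ρ b
  | i, ρ, .galw a => ∀ j, 1 ≤ j → j ≤ i → SG.sat h j ρ a
  | i, ρ, .fsome a => ∃ j, 1 ≤ j ∧ j ≤ i ∧ SG.sat h j ρ a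

/-- Semantics of positive guards. -/
def PG.sat {C : Type} (h : History C) : ℕ → (ℕ → C) → PG C → Prop
  | i, ρ, .simple g => SG.sat h i ρ g
  | i, ρ, .and a b => PG.sat h i ρ a ∧ PG.sat h i ρ b
  | i, ρ, .or a b => PG.sat h i ρ a ∨ PG.sat h i ρ b
  | i, ρ, .galw a => ∀ j, 1 ≤ j → j ≤ i → PG.sat h j ρ a
  | i, ρ, .fsome a => ∃ j, 1 ≤ j ∧ j ≤ i ∧ PG.sat h j ρ a
  | i, ρ, .since a b =>
      ∃ j, 1 ≤ j ∧ j ≤ i ∧ PG.sat h j ρ b ∧ ∀ k, j < k → k ≤ i → PG.sat h k ρ a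

/-- Variables of a simple guard. -/
def SG.vars {C : Type} : SG C → List ℕ
  | .atom _ args => args.filterMap (Sum.elim some fun _ => none)
  | .and a b => a.vars ++ b.vars
  | .galw a => a.vars
  | .fsome a => a.vars

/-- `G` is a positive guard over the variables `xs`: every constituent simple guard has
exactly the variables `xs` (as a set). -/
def PG.Over {C : Type} (xs : List ℕ) : PG C → Prop
  | .simple g => ∀ x, x ∈ g.vars ↔ x ∈ xs
  | .and a b => PG.Over xs a ∧ PG.Over xs b
  | .or a b => PG.Over xs a ∧ PG.Over xs b
  | .galw a => PG.Over xs a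
  | .fsome a => PG.Over xs a
  | .since a b => PG.Over xs a ∧ PG.Over xs b

/-!
In a satisfying instance of a positive guard, every variable ends up bound to an argument of an
event that actually occurs in `h`: each branch of the guard bottoms out in an atom `p(u⃗)` evaluated
at some session `1 ≤ j ≤ |h|` (the `∨` and `S` cases choose one such branch, `G⁻¹` is evaluated at the
current index), and every constituent simple guard mentions all of `x⃗`. Since `x⃗` has no repetitions,
each entry of a solution is the value of some variable, so solutions are tuples of length `|x⃗|` over
the finite set of constants occurring in `h`.
-/

def History.consts {C : Type} (h : History C) : Set C := {c | ∃ s ∈ h, ∃ e ∈ s, c ∈ e.2}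

theorem Set.Finite.finite_lists_length_eq {α : Type*} {S : Set α} (hS : S.Finite) (n : ℕ) :
    {l : List α | l.length = n ∧ ∀ a ∈ l, a ∈ S}.Finite := by
  have : Finite S := hS
  refine ((List.finite_length_eq S n).image (List.map Subtype.val)).subset ?_
  rintro l ⟨rfl, hl⟩
  lift l to List S using hl
  exact ⟨l, by simp⟩

namespace History

variable {C : Type} (h : History C)

theorem consts_finite : h.consts.Finite := by
  have : h.consts = ⋃ s ∈ {s | s ∈ h}, ⋃ e ∈ (s : Set (ℕ × List C)), {c | c ∈ e.2} := by
    ext; simp [consts]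
  rw [this]
  exact h.finite_toSet.biUnion fun s _ => s.finite_toSet.biUnion fun e _ => e.2.finite_toSet

theorem mem_consts_of_mem_getD {k : ℕ} {p : ℕ} {cs : List C} {c : C}
    (he : (p, cs) ∈ h.getD k ∅) (hc : c ∈ cs) : c ∈ h.consts := by
  rcases lt_or_ge k h.length with hk | hk
  · rw [List.getD_eq_getElem _ _ hk] at he
    exact ⟨h[k], List.getElem_mem hk, (p, cs), he, hc⟩
  · rw [List.getD_eq_default _ _ hk] at he
    simp at he

end History

theorem updEnv_map_self {C : Type} (ρ : ℕ → C) {xs : List ℕ} (hxs : xs.Nodup) {us : List C}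
    (hlen : us.length = xs.length) : xs.map (updEnv ρ xs us) = us := by
  induction xs generalizing us with
  | nil => simp_all
  | cons x xs ih =>
    obtain _ | ⟨u, us⟩ := us
    · simp at hlen
    rw [List.nodup_cons] at hxs
    have hrest : ∀ y ∈ xs, updEnv ρ (x :: xs) (u :: us) y = updEnv ρ xs us y := by
      intro y hy
      have : y ≠ x := fun e => hxs.1 (e ▸ hy)
      simp [updEnv, List.lookup, beq_false_of_ne this]
    simp only [List.map_cons, List.map_congr_left hrest, ih hxs.2 (by simpa using hlen)]
    simp [updEnv]

namespace SG

variable {C : Type} {h : History C}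

theorem sat_vars_mem_consts {g : SG C} {i : ℕ} {ρ : ℕ → C} (hs : g.sat h i ρ) (hi : 1 ≤ i)
    {x : ℕ} (hx : x ∈ g.vars) : ρ x ∈ h.consts := by
  induction g generalizing i with
  | atom p args =>
    obtain ⟨a, ha, hax⟩ := List.mem_filterMap.mp hx
    obtain _ | _ := a <;> simp only [Sum.elim_inl, Sum.elim_inr, Option.some.injEq,
      reduceCtorEq] at hax
    subst hax
    exact h.mem_consts_of_mem_getD hs (List.mem_map_of_mem (f := Sum.elim ρ id) ha)
  | and a b iha ihb =>
    rcases List.mem_append.mp hx with hx | hx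
    · exact iha hs.1 hi hx
    · exact ihb hs.2 hi hx
  | galw a ih => exact ih (hs i hi le_rfl) hi hx
  | fsome a ih =>
    obtain ⟨j, hj, -, hsj⟩ := hs
    exact ih hsj hj hx

end SG

theorem PG.Over.sat_mem_consts {C : Type} {h : History C} {xs : List ℕ} {G : PG C}
    (hover : G.Over xs) {i : ℕ} {ρ : ℕ → C} (hs : G.sat h i ρ) (hi : 1 ≤ i) {x : ℕ}
    (hx : x ∈ xs) : ρ x ∈ h.consts := by
  induction G generalizing i with
  | simple g => exact SG.sat_vars_mem_consts hs hi ((hover x).mpr hx)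
  | and a b iha _ => exact iha hover.1 hs.1 hi
  | or a b iha ihb => exact hs.elim (iha hover.1 · hi) (ihb hover.2 · hi)
  | galw a ih => exact ih hover (hs i hi le_rfl) hi
  | fsome a ih =>
    obtain ⟨j, hj, -, hsj⟩ := hs
    exact ih hover hsj hj
  | since a b _ ihb =>
    obtain ⟨j, hj, -, hsj, -⟩ := hs
    exact ihb hover.2 hsj hj

/-- For a positive guard `G` over (distinct) variables `x⃗` and a
(nonempty) history `h`, the set of solutions of the guard instantiation problem
`(h, G(x⃗))` — the tuples `u⃗` of constants with `h ⊨ G(u⃗)` — is finite, and every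
solution consists only of constants that appear in `h`. -/
theorem guard_solutions_finite {C : Type} (h : History C) (hne : h ≠ [])
    (G : PG C) (xs : List ℕ) (hnd : xs.Nodup) (hover : PG.Over xs G) :
    {us : List C | us.length = xs.length ∧
        ∀ ρ : ℕ → C, PG.sat h h.length (updEnv ρ xs us) G}.Finite ∧
      ∀ us : List C, us.length = xs.length →
        (∀ ρ : ℕ → C, PG.sat h h.length (updEnv ρ xs us) G) →
        ∀ c ∈ us, ∃ s ∈ h, ∃ e ∈ s, c ∈ e.2 := by
  have hlen_pos : 1 ≤ h.length := List.length_pos_iff.mpr hne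
  have hconsts : ∀ us : List C, us.length = xs.length →
      (∀ ρ : ℕ → C, PG.sat h h.length (updEnv ρ xs us) G) → ∀ c ∈ us, c ∈ h.consts := by
    intro us hlen hsat c hc
    -- `C` may be empty, so the environment is built from `c` itself.
    rw [← updEnv_map_self (fun _ => c) hnd hlen] at hc
    obtain ⟨x, hx, hxc⟩ := List.mem_map.mp hc
    exact hxc ▸ hover.sat_mem_consts (hsat _) hlen_pos hx
  refine ⟨(h.consts_finite.finite_lists_length_eq xs.length).subset ?_, hconsts⟩
  rintro us ⟨hlen, hsat⟩
  exact ⟨hlen, hconsts us hlen hsat⟩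
end

section
/- Let φ(x⃗) be a formula all of whose atoms are interpreted relations (φ contains no uninterpreted predicate atoms and no temporal operators), let p and q be uninterpreted predicates of appropriate arities, and let h be the history consisting of the single session {q(0)}. Then, under the extended-guard semantics, h ⊨ ∃(x⃗,y) : (p(x⃗) ∨ q(y)). φ(x⃗) if and only if there exist constants c⃗ such that φ(c⃗) is true; i.e., the model checking problem is equivalent to the validity of the unrestricted first-order formula ∃x⃗. φ(x⃗). -/
theorem Tm.eval_congr {C : Type} (F : ℕ → List C → C) (ρ₁ ρ₂ : ℕ → C) (t : Tm C)
    (h : ∀ v ∈ t.fv, ρ₁ v = ρ₂ v) : t.eval F ρ₁ = t.eval F ρ₂ := by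
  cases t with
  | var x => simp only [Tm.fv, List.mem_singleton] at h; simp [Tm.eval, h x rfl]
  | const c => simp [Tm.eval]
  | func f args =>
    rw [Tm.eval, Tm.eval]
    congr 1
    refine List.map_congr_left ?_
    rintro ⟨t', ht'⟩ _
    refine Tm.eval_congr F ρ₁ ρ₂ t' (fun v hv => h v ?_)
    rw [Tm.fv]
    simp only [List.mem_flatMap, List.mem_attach, true_and, Subtype.exists]
    exact ⟨t', ht', hv⟩
termination_by sizeOf t
decreasing_by simp_wf; subst_vars; have := List.sizeOf_lt_of_mem ht'; simp; omega

/-- Formulas all of whose atoms are interpreted relations (no uninterpreted predicate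
atoms and no temporal operators). -/
inductive InterpOnly {C : Type} : Fm C → Prop where
  | rel : ∀ r ts, InterpOnly (.rel r ts)
  | and : ∀ a b, InterpOnly a → InterpOnly b → InterpOnly (.and a b)
  | not : ∀ a, InterpOnly a → InterpOnly (.not a)

theorem Sat_congr {C : Type} (F : ℕ → List C → C) (R : ℕ → List C → Bool)
    (h : History C) (i : ℕ) (φ : Fm C) (hio : InterpOnly φ) :
    ∀ ρ₁ ρ₂ : ℕ → C, (∀ v ∈ φ.fv, ρ₁ v = ρ₂ v) →
      (Sat F R h i ρ₁ φ ↔ Sat F R h i ρ₂ φ) := by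
  induction hio with
  | rel r ts =>
    intro ρ₁ ρ₂ hagree
    simp only [Sat]
    have : ts.map (Tm.eval F ρ₁) = ts.map (Tm.eval F ρ₂) := by
      refine List.map_congr_left fun t ht => Tm.eval_congr F ρ₁ ρ₂ t fun v hv => hagree v ?_
      simp only [Fm.fv, List.mem_flatMap]
      exact ⟨t, ht, hv⟩
    rw [this]
  | and a b _ _ iha ihb =>
    intro ρ₁ ρ₂ hagree
    simp only [Fm.fv, List.mem_append] at hagree
    simp only [Sat]
    rw [iha ρ₁ ρ₂ fun v hv => hagree v (Or.inl hv), ihb ρ₁ ρ₂ fun v hv => hagree v (Or.inr hv)]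
  | not a _ iha =>
    intro ρ₁ ρ₂ hagree
    simp only [Sat]
    rw [iha ρ₁ ρ₂ hagree]

theorem lookup_zip_isSome {C : Type} :
    ∀ (xs : List ℕ) (cs : List C), cs.length = xs.length → ∀ v ∈ xs,
      ((xs.zip cs).lookup v).isSome
  | [], _, _, v, hv => by simp at hv
  | x :: xs, [], hlen, v, hv => by simp at hlen
  | x :: xs, c :: cs, hlen, v, hv => by
    simp only [List.zip_cons_cons, List.lookup_cons]
    rcases List.mem_cons.mp hv with rfl | hv
    · simp
    · by_cases hvx : v == x
      · simp [hvx]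
      · simp only [hvx]
        exact lookup_zip_isSome xs cs (by simpa using hlen) v hv

theorem lookup_zip_not_mem {C : Type} :
    ∀ (xs : List ℕ) (cs : List C) (v : ℕ), v ∉ xs → (xs.zip cs).lookup v = none
  | [], cs, v, hv => by simp
  | x :: xs, [], v, hv => by simp
  | x :: xs, c :: cs, v, hv => by
    simp only [List.mem_cons, not_or] at hv
    simp only [List.zip_cons_cons, List.lookup_cons]
    have : (v == x) = false := by simpa using hv.1
    simp only [this]
    exact lookup_zip_not_mem xs cs v hv.2

theorem updEnv_append_agree {C : Type} (ρ : ℕ → C) (xs : List ℕ) (y : ℕ)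
    (cs : List C) (c : C) (hlen : cs.length = xs.length) (v : ℕ) (hv : v ∈ xs) :
    updEnv ρ (xs ++ [y]) (cs ++ [c]) v = updEnv ρ xs cs v := by
  unfold updEnv
  rw [List.zip_append hlen.symm, List.lookup_append]
  obtain ⟨d, hd⟩ := Option.isSome_iff_exists.mp (lookup_zip_isSome xs cs hlen v hv)
  simp [hd]

theorem updEnv_append_y {C : Type} (ρ : ℕ → C) (xs : List ℕ) (y : ℕ)
    (cs : List C) (c : C) (hlen : cs.length = xs.length) (hy : y ∉ xs) :
    updEnv ρ (xs ++ [y]) (cs ++ [c]) y = c := by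
  unfold updEnv
  rw [List.zip_append hlen.symm, List.lookup_append, lookup_zip_not_mem xs cs y hy]
  simp [List.lookup_cons]


/-- Let `φ(x⃗)` contain only interpreted-relation atoms, let `p ≠ q`
be uninterpreted predicates, and let `h` be the one-session history `{q(0)}`.  Under
the extended-guard semantics, `h ⊨ ∃(x⃗,y) : (p(x⃗) ∨ q(y)). φ(x⃗)` — i.e. some tuple of
constants satisfies the guard `p(x⃗) ∨ q(y)` and `φ` at `(h,1)` — iff there are
constants `c⃗` with `φ(c⃗)` true. -/
theorem disjunctive_guard_undecidability {C : Type}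
    (F : ℕ → List C → C) (R : ℕ → List C → Bool)
    (xs : List ℕ) (y : ℕ) (hnd : xs.Nodup) (hy : y ∉ xs)
    (p q : ℕ) (hpq : p ≠ q) (c0 : C)
    (φ : Fm C) (hio : InterpOnly φ) (hfv : ∀ v ∈ φ.fv, v ∈ xs) (ρ : ℕ → C) :
    (∃ cs : List C, cs.length = (xs ++ [y]).length ∧
        Sat F R [{(q, [c0])}] 1 (updEnv ρ (xs ++ [y]) cs)
          (.not (.and (.not (.atom p (xs.map Tm.var))) (.not (.atom q [Tm.var y])))) ∧
        Sat F R [{(q, [c0])}] 1 (updEnv ρ (xs ++ [y]) cs) φ) ↔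
      (∃ cs : List C, cs.length = xs.length ∧
        Sat F R [{(q, [c0])}] 1 (updEnv ρ xs cs) φ) := by
  constructor
  · rintro ⟨cs, hlen, _, hφ⟩
    simp only [List.length_append, List.length_cons, List.length_nil] at hlen
    have hne : cs ≠ [] := by intro h; subst h; simp at hlen
    have hdec : cs = cs.dropLast ++ [cs.getLast hne] := (List.dropLast_append_getLast hne).symm
    have hlen' : cs.dropLast.length = xs.length := by
      rw [List.length_dropLast]; omega
    refine ⟨cs.dropLast, hlen', ?_⟩
    rw [← Sat_congr F R _ 1 φ hio _ _ (fun v hv => ?_)]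
    · exact hφ
    · conv_lhs => rw [hdec]
      exact updEnv_append_agree ρ xs y _ _ hlen' v (hfv v hv)
  · rintro ⟨cs, hlen, hφ⟩
    refine ⟨cs ++ [c0], by simp [hlen], ?_, ?_⟩
    · simp only [Sat, not_and, not_not]
      intro _
      simp only [List.map_cons, List.map_nil, Tm.eval]
      rw [updEnv_append_y ρ xs y cs c0 hlen hy]
      simp
    · rw [Sat_congr F R _ 1 φ hio _ _ (fun v hv => updEnv_append_agree ρ xs y cs c0 hlen v (hfv v hv))]
      exact hφ
end
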